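/- arXiv:2211.10540 — 3 statements merged into one kernel-verified Lean document; each statement's English description precedes it below -/
import Mathlib

section
/- Fourier–Motzkin elimination preserves satisfiability: for a finite system of linear inequalities over variables x₁,…,xᵣ partitioned into lower bounds Aⱼ ≤ xᵣ (j = 1..n_A), upper bounds xᵣ ≤ Bⱼ (j = 1..n_B), and inequalities φᵢ not mentioning xᵣ, the system is satisfiable over ℝ if and only if the system {Aᵢ ≤ Bⱼ : 1 ≤ i ≤ n_A, 1 ≤ j ≤ n_B} ∪ {φᵢ} over the remaining variables is satisfiable over ℝ. -/
theorem exists_between_iff_forall_le {α ι κ : Type*} [Lattice α] [Nonempty α] [Finite ι]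
    [Finite κ] (a : ι → α) (b : κ → α) :
    (∃ x, (∀ i, a i ≤ x) ∧ ∀ j, x ≤ b j) ↔ ∀ i j, a i ≤ b j := by
  refine ⟨fun ⟨x, hax, hxb⟩ i j => (hax i).trans (hxb j), fun h => ?_⟩
  rcases isEmpty_or_nonempty ι with hι | hι
  · obtain ⟨x, hx⟩ := (Set.finite_range b).bddBelow
    exact ⟨x, isEmptyElim, fun j => hx (Set.mem_range_self j)⟩
  · obtain ⟨_⟩ := nonempty_fintype ι
    exact ⟨Finset.univ.sup' Finset.univ_nonempty a, fun i => Finset.le_sup' a (Finset.mem_univ i),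
      fun j => Finset.sup'_le _ _ fun i _ => h i j⟩

/-- Fourier–Motzkin elimination preserves satisfiability: a system of linear
inequalities over `x₁,…,x_{r-1}` and `x_r`, consisting of lower bounds
`Aⱼ ≤ x_r`, upper bounds `x_r ≤ Bⱼ` (with `Aⱼ, Bⱼ` affine expressions with
rational coefficients in the remaining variables) and inequalities `φᵢ` not
mentioning `x_r`, is satisfiable over ℝ iff the system
`{Aᵢ ≤ Bⱼ} ∪ {φᵢ}` over the remaining variables is satisfiable over ℝ. -/
theorem fourier_motzkin_preserves_satisfiability
    (m nA nB nφ : ℕ)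
    (Acoef : Fin nA → Fin m → ℚ) (Aconst : Fin nA → ℚ)
    (Bcoef : Fin nB → Fin m → ℚ) (Bconst : Fin nB → ℚ)
    (φcoef : Fin nφ → Fin m → ℚ) (φconst : Fin nφ → ℚ) :
    (∃ (y : Fin m → ℝ) (x : ℝ),
        (∀ j, (∑ i, (Acoef j i : ℝ) * y i) + (Aconst j : ℝ) ≤ x) ∧
        (∀ j, x ≤ (∑ i, (Bcoef j i : ℝ) * y i) + (Bconst j : ℝ)) ∧
        (∀ j, (∑ i, (φcoef j i : ℝ) * y i) ≤ (φconst j : ℝ))) ↔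
    (∃ y : Fin m → ℝ,
        (∀ jA jB,
            (∑ i, (Acoef jA i : ℝ) * y i) + (Aconst jA : ℝ) ≤
            (∑ i, (Bcoef jB i : ℝ) * y i) + (Bconst jB : ℝ)) ∧
        (∀ j, (∑ i, (φcoef j i : ℝ) * y i) ≤ (φconst j : ℝ))) := by
  refine exists_congr fun y => ?_
  rw [← exists_between_iff_forall_le]
  simp only [← and_assoc, exists_and_right]
end

section
/- No waiting net with injective labeling over alphabet {a, b} and without ε-transitions recognizes the prefix-closed timed language L = Pref({(a,d₁) : 2 ≤ d₁ ≤ 3} ∪ {(b,d₂) : 4 ≤ d₂ ≤ 5}); in the simplified two-transition setting: there is no choice of rational intervals [α_a, β_a], [α_b, β_b] with both transitions continuously enabled from time 0 in free choice such that the set of firable first events equals {(a,d) : 2 ≤ d ≤ 3} ∪ {(b,d) : 4 ≤ d ≤ 5}, because urgency forces an event at time min(β_a, β_b), so at most one interval can end before the other begins. -/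
/-! Urgency makes `min β_a β_b` a common deadline: every firable first event happens no later
than it, and any transition that can fire first at all can also fire first exactly at it. The
target language would therefore need its `a`-events and `b`-events to end at the same time,
but `a` ends at `3` while `b` is still possible at `5`. -/

section UrgentFirstEvents

variable {α : Type*} [LinearOrder α]

/-- Labels: `true` is the transition `a`, `false` the transition `b`. -/
def urgentFirstEvents (αa βa αb βb : α) : Set (Bool × α) :=
  { p | (p.1 = true ∧ αa ≤ p.2 ∧ p.2 ≤ min βa βb) ∨
        (p.1 = false ∧ αb ≤ p.2 ∧ p.2 ≤ min βa βb) }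

variable {αa βa αb βb : α} {p : Bool × α}

theorem le_min_of_mem_urgentFirstEvents (hp : p ∈ urgentFirstEvents αa βa αb βb) :
    p.2 ≤ min βa βb := by
  rcases hp with ⟨-, -, h⟩ | ⟨-, -, h⟩ <;> exact h

theorem mk_min_mem_urgentFirstEvents (hp : p ∈ urgentFirstEvents αa βa αb βb) :
    (p.1, min βa βb) ∈ urgentFirstEvents αa βa αb βb := by
  rcases hp with ⟨hl, hα, hβ⟩ | ⟨hl, hα, hβ⟩
  · exact Or.inl ⟨hl, hα.trans hβ, le_rfl⟩
  · exact Or.inr ⟨hl, hα.trans hβ, le_rfl⟩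

end UrgentFirstEvents

/-- Under the urgent semantics, if two transitions labeled `a` (= `true`) and
`b` (= `false`) are both fully enabled from time 0, the set of possible first
timed events is
`{(a,d) : α_a ≤ d ≤ min(β_a, β_b)} ∪ {(b,d) : α_b ≤ d ≤ min(β_a, β_b)}`.
There is no choice of rational intervals `[α_a, β_a]`, `[α_b, β_b]` making
this set equal to `{(a,d) : 2 ≤ d ≤ 3} ∪ {(b,d) : 4 ≤ d ≤ 5}`: urgency forces
an event by time `min(β_a, β_b)`, so at most one interval can end before the
other begins. -/
theorem no_waiting_net_for_ta1 :
    ¬ ∃ αa βa αb βb : ℚ,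
      0 ≤ αa ∧ αa ≤ βa ∧ 0 ≤ αb ∧ αb ≤ βb ∧
      ({ p : Bool × ℚ |
          (p.1 = true ∧ αa ≤ p.2 ∧ p.2 ≤ min βa βb) ∨
          (p.1 = false ∧ αb ≤ p.2 ∧ p.2 ≤ min βa βb) } =
       { p : Bool × ℚ |
          (p.1 = true ∧ 2 ≤ p.2 ∧ p.2 ≤ 3) ∨
          (p.1 = false ∧ 4 ≤ p.2 ∧ p.2 ≤ 5) }) := by
  rintro ⟨αa, βa, αb, βb, -, -, -, -, h⟩
  change urgentFirstEvents αa βa αb βb = _ at h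
  have hb5 : ((false, 5) : Bool × ℚ) ∈ urgentFirstEvents αa βa αb βb := by
    rw [h]; right; norm_num
  have ha2 : ((true, 2) : Bool × ℚ) ∈ urgentFirstEvents αa βa αb βb := by
    rw [h]; left; norm_num
  have hlate : (5 : ℚ) ≤ min βa βb := le_min_of_mem_urgentFirstEvents hb5
  have hearly : ((true, min βa βb) : Bool × ℚ) ∈ _ := mk_min_mem_urgentFirstEvents ha2
  rw [h] at hearly
  rcases hearly with ⟨-, -, hle⟩ | ⟨hne, -, -⟩
  · linarith
  · exact Bool.noConfusion hne
end

section
/- No time Petri net with exactly two transitions t₀ (interval [0,20]) followed by t₁ (interval [α, β], enabled only by the firing of t₀, with clock reset at enabling) recognizes the timed language {(t₀, d₀)(t₁, 20) : 0 ≤ d₀ ≤ 20}: there exist no rationals α ≤ β such that for every d₀ ∈ [0, 20], the set of legal firing dates d₀ + d with d ∈ [α, β] equals {20}. -/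
lemma add_eq_of_setOf_add_mem_Icc_eq_singleton {a b d₀ c : ℝ} (hab : a ≤ b)
    (h : {x : ℝ | ∃ d : ℝ, a ≤ d ∧ d ≤ b ∧ x = d₀ + d} = {c}) : d₀ + a = c := by
  have hmem : d₀ + a ∈ ({c} : Set ℝ) := h ▸ ⟨a, le_rfl, hab, rfl⟩
  exact hmem

/-- No time Petri net with two transitions `t₀` (interval `[0,20]`) followed
by `t₁` (interval `[α,β]`, whose clock is reset when `t₀` fires at date `d₀`)
recognizes `{(t₀,d₀)(t₁,20) : 0 ≤ d₀ ≤ 20}`: there are no rationals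
`0 ≤ α ≤ β` such that for every `d₀ ∈ [0,20]`, the set of legal firing dates
`{d₀ + d : α ≤ d ≤ β}` of `t₁` equals `{20}`. -/
theorem no_tpn_for_waiting_language :
    ¬ ∃ α β : ℚ, 0 ≤ α ∧ α ≤ β ∧
      ∀ d₀ : ℝ, 0 ≤ d₀ → d₀ ≤ 20 →
        { x : ℝ | ∃ d : ℝ, (α : ℝ) ≤ d ∧ d ≤ (β : ℝ) ∧ x = d₀ + d } =
        {(20 : ℝ)} := by
  rintro ⟨α, β, -, hαβ, h⟩
  have hαβ' : (α : ℝ) ≤ β := by exact_mod_cast hαβ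
  have at_zero := add_eq_of_setOf_add_mem_Icc_eq_singleton hαβ' (h 0 le_rfl (by norm_num))
  have at_twenty := add_eq_of_setOf_add_mem_Icc_eq_singleton hαβ' (h 20 (by norm_num) le_rfl)
  linarith
end
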